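/- arXiv:1804.00335 — 5 statements merged into one kernel-verified Lean document; each statement's English description precedes it below -/
import Mathlib

section
/- Let V be a finite set of K ≥ 2 actions, let η > 0 be a learning rate, and let ℓ_1, …, ℓ_T : V → [0, ∞) be loss functions. For t = 1, …, T define the probability vector q_t on V by q_t(i) = exp(−η Σ_{s=1}^{t−1} ℓ_s(i)) / Σ_{j∈V} exp(−η Σ_{s=1}^{t−1} ℓ_s(j)). For each t let S_t ⊆ V be a subset such that ℓ_t(i) ≤ 1/η for all i ∈ S_t. Then for every i* ∈ V, Σ_{t=1}^T Σ_{i∈V} q_t(i) ℓ_t(i) − Σ_{t=1}^T ℓ_t(i*) ≤ (ln K)/η + η Σ_{t=1}^T ( Σ_{i∈S_t} q_t(i)(1 − q_t(i)) ℓ_t(i)² + Σ_{i∉S_t} q_t(i) ℓ_t(i)² ). -/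
lemma exp_le_one_add_add_sq {y : ℝ} (hy : y ≤ 1) : Real.exp y ≤ 1 + y + y ^ 2 := by
  rcases le_or_gt y 0 with h | h
  · have h1 : 1 - y > 0 := by linarith
    have h2 : -y + 1 ≤ Real.exp (-y) := Real.add_one_le_exp (-y)
    have h3 : Real.exp y * Real.exp (-y) = 1 := by
      rw [← Real.exp_add]; simp
    have h4 : Real.exp y * (1 - y) ≤ 1 := by
      calc Real.exp y * (1 - y) ≤ Real.exp y * Real.exp (-y) := by
            apply mul_le_mul_of_nonneg_left (by linarith) (Real.exp_pos y).le
        _ = 1 := h3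
    nlinarith [Real.exp_pos y, pow_nonneg (neg_nonneg.mpr h) 3]
  · have hb := Real.exp_bound' h.le hy (n := 3) (by norm_num)
    have hs : (∑ m ∈ Finset.range 3, y ^ m / m.factorial) = 1 + y + y ^ 2 / 2 := by
      simp [Finset.sum_range_succ]
    rw [hs] at hb
    norm_num [Nat.factorial] at hb
    have hcube : y ^ 3 ≤ y ^ 2 := by nlinarith [sq_nonneg y]
    nlinarith

lemma step_bound {V : Type*} [Fintype V] [DecidableEq V]
    (q X : V → ℝ) (hq0 : ∀ i, 0 ≤ q i) (hq1 : ∑ i, q i = 1)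
    (hX0 : ∀ i, 0 ≤ X i) (S : Finset V) (hXS : ∀ i ∈ S, X i ≤ 1) :
    Real.log (∑ i, q i * Real.exp (-X i)) ≤
      -∑ i, q i * X i +
        (∑ i ∈ S, q i * (1 - q i) * X i ^ 2 +
          ∑ i ∈ Finset.univ \ S, q i * X i ^ 2) := by
  set μ := ∑ i, q i * X i with hμ
  have hμ0 : 0 ≤ μ := Finset.sum_nonneg fun i _ => mul_nonneg (hq0 i) (hX0 i)
  set ν := min μ 1 with hν
  have hν0 : 0 ≤ ν := le_min hμ0 zero_le_one
  have hν1 : ν ≤ 1 := min_le_right _ _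
  have hq1' : ∀ i, q i ≤ 1 := by
    intro i
    have := Finset.single_le_sum (f := q) (fun j _ => hq0 j) (Finset.mem_univ i)
    linarith [hq1 ▸ this]
  -- pointwise bound
  have key : ∀ i, q i * Real.exp (-X i) ≤
      Real.exp (-ν) * (q i * (1 + (ν - X i) + (ν - X i) ^ 2)) := by
    intro i
    have h1 : Real.exp (-X i) = Real.exp (-ν) * Real.exp (ν - X i) := by
      rw [← Real.exp_add]; ring_nf
    have h2 : Real.exp (ν - X i) ≤ 1 + (ν - X i) + (ν - X i) ^ 2 :=
      exp_le_one_add_add_sq (by linarith [hX0 i])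
    rw [h1]
    calc q i * (Real.exp (-ν) * Real.exp (ν - X i))
        = Real.exp (-ν) * (q i * Real.exp (ν - X i)) := by ring
      _ ≤ Real.exp (-ν) * (q i * (1 + (ν - X i) + (ν - X i) ^ 2)) := by
          apply mul_le_mul_of_nonneg_left _ (Real.exp_pos (-ν)).le
          exact mul_le_mul_of_nonneg_left h2 (hq0 i)
  have hsumid : ∑ i, q i * (1 + (ν - X i) + (ν - X i) ^ 2) =
      1 + (ν - μ) + ∑ i, q i * (ν - X i) ^ 2 := by
    have : ∀ i, q i * (1 + (ν - X i) + (ν - X i) ^ 2) =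
        q i + (q i * ν - q i * X i) + q i * (ν - X i) ^ 2 := by intro i; ring
    rw [Finset.sum_congr rfl fun i _ => this i]
    rw [Finset.sum_add_distrib, Finset.sum_add_distrib, Finset.sum_sub_distrib,
      ← Finset.sum_mul, hq1]
    ring
  have hsum : ∑ i, q i * Real.exp (-X i) ≤
      Real.exp (-ν) * (1 + (ν - μ) + ∑ i, q i * (ν - X i) ^ 2) := by
    calc ∑ i, q i * Real.exp (-X i)
        ≤ ∑ i, Real.exp (-ν) * (q i * (1 + (ν - X i) + (ν - X i) ^ 2)) :=
          Finset.sum_le_sum fun i _ => key i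
      _ = Real.exp (-ν) * (1 + (ν - μ) + ∑ i, q i * (ν - X i) ^ 2) := by
          rw [← Finset.mul_sum, hsumid]
  have hpos : 0 < ∑ i, q i * Real.exp (-X i) := by
    have hex : ∃ i, 0 < q i := by
      by_contra hcon
      push_neg at hcon
      have : (∑ i, q i) ≤ 0 := Finset.sum_nonpos fun i _ => hcon i
      rw [hq1] at this; linarith
    obtain ⟨i, hi⟩ := hex
    exact Finset.sum_pos' (fun j _ => mul_nonneg (hq0 j) (Real.exp_pos _).le)
      ⟨i, Finset.mem_univ i, mul_pos hi (Real.exp_pos _)⟩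
  set Z := 1 + (ν - μ) + ∑ i, q i * (ν - X i) ^ 2 with hZdef
  have hZpos : 0 < Z := by
    have h := lt_of_lt_of_le hpos hsum
    rcases mul_pos_iff.mp h with ⟨_, hZ⟩ | ⟨he, _⟩
    · exact hZ
    · exact absurd he (not_lt.mpr (Real.exp_pos _).le)
  have hlog : Real.log (∑ i, q i * Real.exp (-X i)) ≤
      -μ + ∑ i, q i * (ν - X i) ^ 2 := by
    calc Real.log (∑ i, q i * Real.exp (-X i))
        ≤ Real.log (Real.exp (-ν) * Z) := Real.log_le_log hpos hsum
      _ = -ν + Real.log Z := by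
          rw [Real.log_mul (Real.exp_pos _).ne' hZpos.ne', Real.log_exp]
      _ ≤ -ν + (Z - 1) := by linarith [Real.log_le_sub_one_of_pos hZpos]
      _ = -μ + ∑ i, q i * (ν - X i) ^ 2 := by rw [hZdef]; ring
  -- now bound the variance term
  have hQ : ∑ i ∈ S, (q i * X i) ^ 2 ≤ 2 * ν * μ - ν ^ 2 := by
    rcases le_or_gt μ 1 with hc | hc
    · have hνμ : ν = μ := min_eq_left hc
      have h1 : ∑ i ∈ S, (q i * X i) ^ 2 ≤ (∑ i ∈ S, q i * X i) ^ 2 :=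
        Finset.sum_sq_le_sq_sum_of_nonneg fun i _ => mul_nonneg (hq0 i) (hX0 i)
      have h2 : ∑ i ∈ S, q i * X i ≤ μ := by
        apply Finset.sum_le_sum_of_subset_of_nonneg (Finset.subset_univ S)
        exact fun i _ _ => mul_nonneg (hq0 i) (hX0 i)
      have h3 : 0 ≤ ∑ i ∈ S, q i * X i :=
        Finset.sum_nonneg fun i _ => mul_nonneg (hq0 i) (hX0 i)
      have h4 : (∑ i ∈ S, q i * X i) ^ 2 ≤ μ ^ 2 := by nlinarith
      rw [hνμ]; nlinarith
    · have hνμ : ν = 1 := min_eq_right hc.le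
      have h1 : ∑ i ∈ S, (q i * X i) ^ 2 ≤ ∑ i ∈ S, q i * X i := by
        apply Finset.sum_le_sum
        intro i hi
        have hXi1 := hXS i hi
        have hXi0 := hX0 i
        have hqi0 := hq0 i
        have hqi1 := hq1' i
        have hqX0 : 0 ≤ q i * X i := mul_nonneg hqi0 hXi0
        have hqX1 : q i * X i ≤ 1 := mul_le_one₀ hqi1 hXi0 hXi1
        nlinarith
      have h2 : ∑ i ∈ S, q i * X i ≤ μ := by
        apply Finset.sum_le_sum_of_subset_of_nonneg (Finset.subset_univ S)
        exact fun i _ _ => mul_nonneg (hq0 i) (hX0 i)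
      rw [hνμ]; nlinarith
  have hvar : ∑ i, q i * (ν - X i) ^ 2 ≤
      ∑ i ∈ S, q i * (1 - q i) * X i ^ 2 + ∑ i ∈ Finset.univ \ S, q i * X i ^ 2 := by
    have hexp : ∑ i, q i * (ν - X i) ^ 2 =
        (∑ i, q i * X i ^ 2) - (2 * ν * μ - ν ^ 2) := by
      have : ∀ i, q i * (ν - X i) ^ 2 =
          q i * X i ^ 2 - (2 * ν) * (q i * X i) + ν ^ 2 * q i := by intro i; ring
      rw [Finset.sum_congr rfl fun i _ => this i]
      rw [Finset.sum_add_distrib, Finset.sum_sub_distrib, ← Finset.mul_sum,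
        ← Finset.mul_sum, hq1, ← hμ]
      ring
    have hsplit : ∑ i, q i * X i ^ 2 =
        ∑ i ∈ S, q i * X i ^ 2 + ∑ i ∈ Finset.univ \ S, q i * X i ^ 2 := by
      rw [add_comm, Finset.sum_sdiff (Finset.subset_univ S)]
    have hGid : ∑ i ∈ S, q i * (1 - q i) * X i ^ 2 =
        ∑ i ∈ S, q i * X i ^ 2 - ∑ i ∈ S, (q i * X i) ^ 2 := by
      rw [← Finset.sum_sub_distrib]
      exact Finset.sum_congr rfl fun i _ => by ring
    rw [hexp, hsplit, hGid]
    linarith [hQ]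
  linarith [hlog, hvar]


/-- Second-order regret bound for exponentially weighted forecasting
(Lemma 5 of the paper). -/
theorem exp_weights_second_order_bound
    {V : Type*} [Fintype V] [DecidableEq V]
    (T : ℕ) (η : ℝ) (hη : 0 < η)
    (hK : 2 ≤ Fintype.card V)
    (ℓ : ℕ → V → ℝ)
    (hℓ : ∀ t ∈ Finset.range T, ∀ i : V, 0 ≤ ℓ t i)
    (q : ℕ → V → ℝ)
    (hq : ∀ t ∈ Finset.range T, ∀ i : V,
      q t i = Real.exp (-η * ∑ s ∈ Finset.range t, ℓ s i) /
        ∑ j : V, Real.exp (-η * ∑ s ∈ Finset.range t, ℓ s j))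
    (S : ℕ → Finset V)
    (hS : ∀ t ∈ Finset.range T, ∀ i ∈ S t, ℓ t i ≤ 1 / η)
    (istar : V) :
    ∑ t ∈ Finset.range T, ∑ i : V, q t i * ℓ t i
        - ∑ t ∈ Finset.range T, ℓ t istar ≤
      Real.log (Fintype.card V) / η +
        η * ∑ t ∈ Finset.range T,
          (∑ i ∈ S t, q t i * (1 - q t i) * ℓ t i ^ 2 +
            ∑ i ∈ Finset.univ \ S t, q t i * ℓ t i ^ 2) := by
  have hne : Nonempty V := Fintype.card_pos_iff.mp (by omega)
  set W : ℕ → ℝ := fun t => ∑ j : V, Real.exp (-η * ∑ s ∈ Finset.range t, ℓ s j) with hW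
  have hWpos : ∀ t, 0 < W t := fun t =>
    Finset.sum_pos (fun j _ => Real.exp_pos _) Finset.univ_nonempty
  set g : ℕ → ℝ := fun t =>
    ∑ i ∈ S t, q t i * (1 - q t i) * ℓ t i ^ 2 +
      ∑ i ∈ Finset.univ \ S t, q t i * ℓ t i ^ 2 with hg
  have hstep : ∀ t ∈ Finset.range T,
      Real.log (W (t + 1)) - Real.log (W t) ≤
        -(η * ∑ i : V, q t i * ℓ t i) + η ^ 2 * g t := by
    intro t ht
    have hq0 : ∀ i, 0 ≤ q t i := fun i => by
      rw [hq t ht i]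
      exact div_nonneg (Real.exp_pos _).le (hWpos t).le
    have hq1 : ∑ i : V, q t i = 1 := by
      rw [Finset.sum_congr rfl fun i _ => hq t ht i, ← Finset.sum_div]
      exact div_self (hWpos t).ne'
    have hratio : ∑ i : V, q t i * Real.exp (-(η * ℓ t i)) = W (t + 1) / W t := by
      have hterm : ∀ i : V, q t i * Real.exp (-(η * ℓ t i)) =
          Real.exp (-η * ∑ s ∈ Finset.range (t + 1), ℓ s i) / W t := by
        intro i
        rw [hq t ht i, div_mul_eq_mul_div, ← Real.exp_add]
        congr 2
        rw [Finset.sum_range_succ]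
        ring
      rw [Finset.sum_congr rfl fun i _ => hterm i, ← Finset.sum_div]
    have hlogdiv : Real.log (W (t + 1) / W t) =
        Real.log (W (t + 1)) - Real.log (W t) :=
      Real.log_div (hWpos (t + 1)).ne' (hWpos t).ne'
    have hb := step_bound (q t) (fun i => η * ℓ t i) hq0 hq1
      (fun i => mul_nonneg hη.le (hℓ t ht i)) (S t)
      (fun i hi => by
        have := hS t ht i hi
        calc η * ℓ t i ≤ η * (1 / η) := mul_le_mul_of_nonneg_left this hη.le
          _ = 1 := by field_simp)
    rw [hratio] at hb
    rw [hlogdiv] at hb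
    refine hb.trans (le_of_eq ?_)
    rw [hg]
    have e1 : ∑ i : V, q t i * (η * ℓ t i) = η * ∑ i : V, q t i * ℓ t i := by
      rw [Finset.mul_sum]; exact Finset.sum_congr rfl fun i _ => by ring
    have e2 : ∑ i ∈ S t, q t i * (1 - q t i) * (η * ℓ t i) ^ 2 =
        η ^ 2 * ∑ i ∈ S t, q t i * (1 - q t i) * ℓ t i ^ 2 := by
      rw [Finset.mul_sum]; exact Finset.sum_congr rfl fun i _ => by ring
    have e3 : ∑ i ∈ Finset.univ \ S t, q t i * (η * ℓ t i) ^ 2 =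
        η ^ 2 * ∑ i ∈ Finset.univ \ S t, q t i * ℓ t i ^ 2 := by
      rw [Finset.mul_sum]; exact Finset.sum_congr rfl fun i _ => by ring
    rw [e1, e2, e3]
    ring
  have htel : Real.log (W T) - Real.log (W 0) ≤
      -(η * ∑ t ∈ Finset.range T, ∑ i : V, q t i * ℓ t i) +
        η ^ 2 * ∑ t ∈ Finset.range T, g t := by
    have h1 : Real.log (W T) - Real.log (W 0) =
        ∑ t ∈ Finset.range T, (Real.log (W (t + 1)) - Real.log (W t)) := by
      rw [Finset.sum_range_sub (fun t => Real.log (W t))]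
    rw [h1]
    calc ∑ t ∈ Finset.range T, (Real.log (W (t + 1)) - Real.log (W t))
        ≤ ∑ t ∈ Finset.range T, (-(η * ∑ i : V, q t i * ℓ t i) + η ^ 2 * g t) :=
          Finset.sum_le_sum hstep
      _ = -(η * ∑ t ∈ Finset.range T, ∑ i : V, q t i * ℓ t i) +
            η ^ 2 * ∑ t ∈ Finset.range T, g t := by
          rw [Finset.sum_add_distrib, Finset.mul_sum, Finset.mul_sum,
            ← Finset.sum_neg_distrib]
  have hW0 : W 0 = (Fintype.card V : ℝ) := by
    simp [hW]
  have hWT : -(η * ∑ t ∈ Finset.range T, ℓ t istar) ≤ Real.log (W T) := by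
    have h1 : Real.exp (-η * ∑ s ∈ Finset.range T, ℓ s istar) ≤ W T :=
      Finset.single_le_sum (f := fun j => Real.exp (-η * ∑ s ∈ Finset.range T, ℓ s j))
        (fun j _ => (Real.exp_pos _).le) (Finset.mem_univ istar)
    calc -(η * ∑ t ∈ Finset.range T, ℓ t istar)
        = Real.log (Real.exp (-η * ∑ s ∈ Finset.range T, ℓ s istar)) := by
          rw [Real.log_exp]; ring
      _ ≤ Real.log (W T) := Real.log_le_log (Real.exp_pos _) h1
  -- combine
  set A := ∑ t ∈ Finset.range T, ∑ i : V, q t i * ℓ t i with hA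
  set B := ∑ t ∈ Finset.range T, ℓ t istar with hB
  set G := ∑ t ∈ Finset.range T, g t with hG
  have hmain : η * (A - B) ≤ Real.log (Fintype.card V) + η ^ 2 * G := by
    have := htel
    rw [hW0] at this
    nlinarith [hWT, this]
  have hfinal : A - B ≤ (Real.log (Fintype.card V) + η ^ 2 * G) / η := by
    rw [le_div_iff₀ hη]
    nlinarith [hmain]
  calc A - B ≤ (Real.log (Fintype.card V) + η ^ 2 * G) / η := hfinal
    _ = Real.log (Fintype.card V) / η + η * G := by field_simp
end

section
/- Let V be a finite set of K ≥ 2 actions and η > 0. Fix a sequence of actions i_1, …, i_{T−1} ∈ V, and let ℓ_1, …, ℓ_T be loss functions where ℓ_t takes the fixed history i_{1:t−1} ∈ V^{t−1} and an action i ∈ V and returns a value ℓ_t(i_{1:t−1}; i) ≥ 0. Define probability vectors q_t on V by q_t(i) = exp(−η Σ_{s=1}^{t−1} ℓ_s(i_{1:s−1}; i)) / Σ_{j∈V} exp(−η Σ_{s=1}^{t−1} ℓ_s(i_{1:s−1}; j)). For each t let S_t ⊆ V be such that ℓ_t(i_{1:t−1}; i) ≤ 1/η for all i ∈ S_t. Then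 for every i* ∈ V, Σ_{t=1}^T Σ_{i∈V} q_t(i) ℓ_t(i_{1:t−1}; i) − Σ_{t=1}^T ℓ_t(i_{1:t−1}; i*) ≤ (ln K)/η + η Σ_{t=1}^T ( Σ_{i∈S_t} q_t(i)(1 − q_t(i)) ℓ_t(i_{1:t−1}; i)² + Σ_{i∉S_t} q_t(i) ℓ_t(i_{1:t−1}; i)² ). -/
open Finset Real

open Finset Real

/-- `exp (-x) ≤ 1 - x + x^2/2` for `x ≥ 0`. -/
lemma exp_neg_le_quad {x : ℝ} (hx : 0 ≤ x) :
    Real.exp (-x) ≤ 1 - x + x ^ 2 / 2 := by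
  have h1 : 1 + x + x ^ 2 / 2 ≤ Real.exp x := by
    have h := Real.sum_le_exp_of_nonneg hx 3
    simp [Finset.sum_range_succ, Nat.factorial] at h
    nlinarith [h]
  have hpos : (0:ℝ) < 1 + x + x ^ 2 / 2 := by positivity
  have h2 : Real.exp (-x) ≤ 1 / (1 + x + x ^ 2 / 2) := by
    rw [Real.exp_neg]
    rw [inv_eq_one_div]
    apply one_div_le_one_div_of_le hpos h1
  refine h2.trans ?_
  rw [div_le_iff₀ hpos]
  nlinarith [sq_nonneg x, sq_nonneg (x^2)]

/-- `exp x ≤ 1 + x + x^2` for `0 ≤ x ≤ 1`. -/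
lemma exp_le_quad {x : ℝ} (h0 : 0 ≤ x) (h1 : x ≤ 1) :
    Real.exp x ≤ 1 + x + x ^ 2 := by
  have habs : |x| ≤ 1 := by rw [abs_of_nonneg h0]; exact h1
  have h := Real.exp_bound habs (n := 3) (by norm_num)
  simp [Finset.sum_range_succ, Nat.factorial] at h
  rw [abs_of_nonneg h0] at h
  have h' := abs_le.mp h
  have hx3 : x ^ 3 ≤ x ^ 2 := by nlinarith
  nlinarith [h'.2]

lemma bernoulli_log_bound {p x : ℝ} (hp0 : 0 ≤ p) (hp1 : p ≤ 1)
    (hx0 : 0 ≤ x) (hx1 : x ≤ 1) :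
    Real.log (1 - p + p * Real.exp (-x)) + p * x ≤ p * (1 - p) * x ^ 2 := by
  -- positivity of the denominator-like quantity
  have hD : ∀ y : ℝ, 0 < 1 - p + p * Real.exp y := by
    intro y
    rcases eq_or_lt_of_le hp0 with h | h
    · rw [← h]; norm_num
    · nlinarith [Real.exp_pos y, mul_pos h (Real.exp_pos y)]
  set f : ℝ → ℝ := fun t =>
    p * (1 - p) * (Real.exp (t * x) - 1 - t * x)
      - Real.log (1 - p + p * Real.exp (-(t * x))) - t * (p * x) with hf
  have hderiv : ∀ t : ℝ, HasDerivAt f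
      (p * (1 - p) * (Real.exp (t * x) * x - x)
        - (p * (Real.exp (-(t * x)) * (-x))) / (1 - p + p * Real.exp (-(t * x)))
        - p * x) t := by
    intro t
    have h1 : HasDerivAt (fun t : ℝ => t * x) x t := hasDerivAt_mul_const x
    have h2 : HasDerivAt (fun t : ℝ => Real.exp (t * x)) (Real.exp (t * x) * x) t :=
      h1.exp
    have h3 : HasDerivAt (fun t : ℝ => -(t * x)) (-x) t := h1.neg
    have h4 : HasDerivAt (fun t : ℝ => Real.exp (-(t * x)))
        (Real.exp (-(t * x)) * (-x)) t := h3.exp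
    have h5 : HasDerivAt (fun t : ℝ => 1 - p + p * Real.exp (-(t * x)))
        (p * (Real.exp (-(t * x)) * (-x))) t := by
      simpa using ((h4.const_mul p).const_add (1 - p))
    have h6 : HasDerivAt (fun t : ℝ => Real.log (1 - p + p * Real.exp (-(t * x))))
        ((p * (Real.exp (-(t * x)) * (-x))) / (1 - p + p * Real.exp (-(t * x)))) t :=
      h5.log (ne_of_gt (hD _))
    have h7 : HasDerivAt (fun t : ℝ =>
        p * (1 - p) * (Real.exp (t * x) - 1 - t * x))
        (p * (1 - p) * (Real.exp (t * x) * x - x)) t := by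
      have := ((h2.sub_const 1).sub h1).const_mul (p * (1 - p))
      simpa using this
    have h8 : HasDerivAt (fun t : ℝ => t * (p * x)) (p * x) t := by
      simpa using hasDerivAt_mul_const (p * x)
    exact (h7.sub h6).sub h8
  have hderiv_nonneg : ∀ t : ℝ, 0 ≤ t → 0 ≤
      (p * (1 - p) * (Real.exp (t * x) * x - x)
        - (p * (Real.exp (-(t * x)) * (-x))) / (1 - p + p * Real.exp (-(t * x)))
        - p * x) := by
    intro t ht
    set E := Real.exp (-(t * x)) with hE
    have hEpos : 0 < E := Real.exp_pos _
    have hDpos : 0 < 1 - p + p * E := hD _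
    have hE1 : E ≤ 1 := by
      rw [hE]; apply Real.exp_le_one_iff.mpr; nlinarith
    have hEexp : Real.exp (t * x) = 1 / E := by
      rw [hE, Real.exp_neg, one_div, inv_inv]
    -- the derivative equals p*(1-p)*x*((exp(tx)-1) - (1-E)/D)
    have key : (p * (Real.exp (-(t * x)) * (-x))) / (1 - p + p * Real.exp (-(t * x)))
        + p * x = p * x * ((1 - p) * (1 - E)) / (1 - p + p * E) := by
      rw [← hE]
      field_simp
      ring
    have hgoal : p * x * ((1 - p) * (1 - E)) / (1 - p + p * E)
        ≤ p * (1 - p) * (Real.exp (t * x) * x - x) := by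
      rw [hEexp]
      rw [div_le_iff₀ hDpos]
      have hfrac : (1 : ℝ) / E * x - x = x * (1 - E) / E := by
        field_simp
      rw [hfrac]
      -- goal: p*x*((1-p)*(1-E)) ≤ p*(1-p)*(x*(1-E)/E) * (1-p+p*E)
      have hDE : E ≤ 1 - p + p * E := by nlinarith
      have h1E : 0 ≤ 1 - E := by linarith
      have expand : p * (1 - p) * (x * (1 - E) / E) * (1 - p + p * E)
          - p * x * ((1 - p) * (1 - E))
          = p * (1 - p) * x * (1 - E) * ((1 - p) * (1 - E)) / E := by
        field_simp; ring
      have hnn : 0 ≤ p * (1 - p) * x * (1 - E) * ((1 - p) * (1 - E)) / E := by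
        apply div_nonneg _ hEpos.le
        have hp1' : 0 ≤ 1 - p := by linarith
        apply mul_nonneg
        apply mul_nonneg
        apply mul_nonneg
        apply mul_nonneg hp0 hp1'
        exact hx0
        exact h1E
        exact mul_nonneg hp1' h1E
      linarith [expand ▸ hnn]
    linarith [key ▸ hgoal]
  -- f is monotone on [0,1], f 0 = 0
  have hmono : MonotoneOn f (Set.Icc (0:ℝ) 1) := by
    apply monotoneOn_of_deriv_nonneg (convex_Icc 0 1)
    · exact fun t _ => ((hderiv t).continuousAt).continuousWithinAt
    · intro t ht
      exact ((hderiv t).differentiableAt).differentiableWithinAt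
    · intro t ht
      rw [(hderiv t).deriv]
      exact hderiv_nonneg t (by
        rw [interior_Icc] at ht; exact ht.1.le)
  have hf0 : f 0 = 0 := by simp [hf]
  have hf1 : 0 ≤ f 1 := by
    have := hmono (Set.mem_Icc.mpr ⟨le_refl 0, zero_le_one⟩)
      (Set.mem_Icc.mpr ⟨zero_le_one, le_refl 1⟩) zero_le_one
    rw [hf0] at this; exact this
  rw [hf] at hf1
  simp only [one_mul] at hf1
  have hexp : Real.exp x ≤ 1 + x + x ^ 2 := exp_le_quad hx0 hx1
  have hpq : 0 ≤ p * (1 - p) := by nlinarith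
  nlinarith [hf1, mul_le_mul_of_nonneg_left hexp hpq]

lemma round_bound {V : Type*} [Fintype V] [DecidableEq V]
    (q x : V → ℝ) (hq0 : ∀ i, 0 ≤ q i) (hq1 : ∑ i, q i = 1)
    (hx : ∀ i, 0 ≤ x i) (S : Finset V) (hS : ∀ i ∈ S, x i ≤ 1) :
    Real.log (∑ i, q i * Real.exp (-x i)) + ∑ i, q i * x i ≤
      ∑ i ∈ S, q i * (1 - q i) * x i ^ 2 + ∑ i ∈ Finset.univ \ S, q i * x i ^ 2 := by
  have hex : ∃ i, 0 < q i := by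
    by_contra h
    push_neg at h
    have h0 : ∑ i, q i = 0 :=
      Finset.sum_eq_zero (fun i _ => le_antisymm (h i) (hq0 i))
    rw [h0] at hq1; norm_num at hq1
  obtain ⟨i₁, hi₁⟩ := hex
  have hterm_nonneg : ∀ i ∈ Finset.univ (α := V), 0 ≤ q i * Real.exp (-x i) :=
    fun i _ => mul_nonneg (hq0 i) (Real.exp_pos _).le
  have hApos : 0 < ∑ i, q i * Real.exp (-x i) :=
    lt_of_lt_of_le (mul_pos hi₁ (Real.exp_pos _))
      (Finset.single_le_sum hterm_nonneg (Finset.mem_univ i₁))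
  have hqle1 : ∀ i : V, q i ≤ 1 := by
    intro i
    rw [← hq1]
    exact Finset.single_le_sum (fun j _ => hq0 j) (Finset.mem_univ i)
  have hslack : ∀ i : V, q i * Real.exp (-x i) - q i + q i * x i ≤ q i * x i ^ 2 / 2 := by
    intro i
    have := mul_le_mul_of_nonneg_left (exp_neg_le_quad (hx i)) (hq0 i)
    nlinarith
  by_cases hcase : ∃ i₀ ∈ S, 1 / 2 < q i₀
  · -- heavy case
    obtain ⟨i₀, hi₀S, hi₀⟩ := hcase
    set c : ℝ := 1 - q i₀ + q i₀ * Real.exp (-x i₀) with hc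
    have hcpos : 0 < c := by
      have := Real.exp_pos (-x i₀)
      have := hqle1 i₀
      nlinarith
    set A : ℝ := ∑ i, q i * Real.exp (-x i) with hA
    have hsplitA : A = q i₀ * Real.exp (-x i₀)
        + ∑ i ∈ Finset.univ.erase i₀, q i * Real.exp (-x i) :=
      (Finset.add_sum_erase _ _ (Finset.mem_univ i₀)).symm
    have hsum_rest : (∑ i ∈ Finset.univ.erase i₀, q i) = 1 - q i₀ := by
      have h := Finset.add_sum_erase Finset.univ q (Finset.mem_univ i₀)
      rw [hq1] at h; linarith
    have hAc : A - c = ∑ i ∈ Finset.univ.erase i₀, (q i * Real.exp (-x i) - q i) := by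
      rw [Finset.sum_sub_distrib, hsum_rest, hsplitA, hc]; ring
    have hAc_nonpos : A - c ≤ 0 := by
      rw [hAc]
      apply Finset.sum_nonpos
      intro i _
      have h1 : Real.exp (-x i) ≤ 1 := Real.exp_le_one_iff.mpr (by linarith [hx i])
      nlinarith [hq0 i]
    have hlog : Real.log A ≤ Real.log c + (A - c) := by
      have h1 : Real.log A - Real.log c = Real.log (A / c) :=
        (Real.log_div hApos.ne' hcpos.ne').symm
      have h2 : Real.log (A / c) ≤ A / c - 1 :=
        Real.log_le_sub_one_of_pos (div_pos hApos hcpos)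
      have h3 : A / c - 1 = (A - c) / c := by field_simp
      have hcle1 : c ≤ 1 := by
        have h1' : Real.exp (-x i₀) ≤ 1 := Real.exp_le_one_iff.mpr (by linarith [hx i₀])
        nlinarith [hq0 i₀]
      have h4 : (A - c) / c ≤ A - c := by
        rw [div_le_iff₀ hcpos]; nlinarith
      linarith
    have hxbar : ∑ i, q i * x i = q i₀ * x i₀ + ∑ i ∈ Finset.univ.erase i₀, q i * x i :=
      (Finset.add_sum_erase _ _ (Finset.mem_univ i₀)).symm
    have hbern : Real.log c + q i₀ * x i₀ ≤ q i₀ * (1 - q i₀) * x i₀ ^ 2 :=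
      bernoulli_log_bound (hq0 i₀) (hqle1 i₀) (hx i₀) (hS i₀ hi₀S)
    have hrest : ∑ i ∈ Finset.univ.erase i₀, (q i * Real.exp (-x i) - q i + q i * x i)
        ≤ ∑ i ∈ Finset.univ.erase i₀, q i * x i ^ 2 / 2 :=
      Finset.sum_le_sum (fun i _ => hslack i)
    have hrest_eq : ∑ i ∈ Finset.univ.erase i₀, (q i * Real.exp (-x i) - q i + q i * x i)
        = (A - c) + ∑ i ∈ Finset.univ.erase i₀, q i * x i := by
      rw [hAc, ← Finset.sum_add_distrib]
    have hsetsplit : Finset.univ.erase i₀ = (S.erase i₀) ∪ (Finset.univ \ S) := by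
      ext j
      simp only [Finset.mem_erase, Finset.mem_union, Finset.mem_sdiff, Finset.mem_univ,
        true_and, and_true]
      constructor
      · intro hj
        by_cases hjS : j ∈ S
        · exact Or.inl ⟨hj, hjS⟩
        · exact Or.inr hjS
      · rintro (⟨h1, _⟩ | h1)
        · exact h1
        · exact fun h => h1 (h ▸ hi₀S)
    have hdisj : Disjoint (S.erase i₀) (Finset.univ \ S) := by
      apply Finset.disjoint_left.mpr
      intro a ha hb
      exact (Finset.mem_sdiff.mp hb).2 (Finset.mem_of_mem_erase ha)
    have hsum_split : ∑ i ∈ Finset.univ.erase i₀, q i * x i ^ 2 / 2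
        = ∑ i ∈ S.erase i₀, q i * x i ^ 2 / 2 + ∑ i ∈ Finset.univ \ S, q i * x i ^ 2 / 2 := by
      rw [hsetsplit, Finset.sum_union hdisj]
    have hS_small : ∑ i ∈ S.erase i₀, q i * x i ^ 2 / 2
        ≤ ∑ i ∈ S.erase i₀, q i * (1 - q i) * x i ^ 2 := by
      apply Finset.sum_le_sum
      intro i hi
      have hne := (Finset.mem_erase.mp hi).1
      have pair : q i + q i₀ ≤ 1 := by
        rw [← hq1]
        have hp : ∑ j ∈ ({i, i₀} : Finset V), q j = q i + q i₀ := Finset.sum_pair hne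
        rw [← hp]
        exact Finset.sum_le_sum_of_subset_of_nonneg (Finset.subset_univ _)
          (fun j _ _ => hq0 j)
      have hhalf : (0:ℝ) ≤ 1 / 2 - q i := by linarith
      nlinarith [mul_nonneg (mul_nonneg (hq0 i) (sq_nonneg (x i))) hhalf]
    have hSc_small : ∑ i ∈ Finset.univ \ S, q i * x i ^ 2 / 2
        ≤ ∑ i ∈ Finset.univ \ S, q i * x i ^ 2 := by
      apply Finset.sum_le_sum
      intro i _
      nlinarith [sq_nonneg (x i), hq0 i]
    have hSsum : ∑ i ∈ S, q i * (1 - q i) * x i ^ 2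
        = q i₀ * (1 - q i₀) * x i₀ ^ 2 + ∑ i ∈ S.erase i₀, q i * (1 - q i) * x i ^ 2 :=
      (Finset.add_sum_erase _ _ hi₀S).symm
    rw [hxbar, hSsum]
    linarith [hrest_eq ▸ hrest]
  · -- easy case
    push_neg at hcase
    have hlog : Real.log (∑ i, q i * Real.exp (-x i)) ≤ (∑ i, q i * Real.exp (-x i)) - 1 :=
      Real.log_le_sub_one_of_pos hApos
    have hsum_all : ∑ i, (q i * Real.exp (-x i) - q i + q i * x i)
        = (∑ i, q i * Real.exp (-x i)) - 1 + ∑ i, q i * x i := by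
      rw [Finset.sum_add_distrib, Finset.sum_sub_distrib, hq1]
    have hall : ∑ i, (q i * Real.exp (-x i) - q i + q i * x i) ≤ ∑ i, q i * x i ^ 2 / 2 :=
      Finset.sum_le_sum (fun i _ => hslack i)
    have hsdiff : ∑ i ∈ Finset.univ \ S, q i * x i ^ 2 / 2 + ∑ i ∈ S, q i * x i ^ 2 / 2
        = ∑ i, q i * x i ^ 2 / 2 := Finset.sum_sdiff (Finset.subset_univ S)
    have hS_small : ∑ i ∈ S, q i * x i ^ 2 / 2 ≤ ∑ i ∈ S, q i * (1 - q i) * x i ^ 2 := by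
      apply Finset.sum_le_sum
      intro i hi
      have hhalf : (0:ℝ) ≤ 1 / 2 - q i := by linarith [hcase i hi]
      nlinarith [mul_nonneg (mul_nonneg (hq0 i) (sq_nonneg (x i))) hhalf]
    have hSc_small : ∑ i ∈ Finset.univ \ S, q i * x i ^ 2 / 2
        ≤ ∑ i ∈ Finset.univ \ S, q i * x i ^ 2 := by
      apply Finset.sum_le_sum
      intro i _
      nlinarith [sq_nonneg (x i), hq0 i]
    linarith [hsum_all ▸ hall]

/-- Second-order regret bound for exponentially weighted forecasting where the
losses may depend on a fixed sequence of past actions (Lemma 7 of the paper).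
Here `x` is the fixed sequence of player actions, and `L t h i` is the loss of
action `i` at round `t` given the history `h` of past actions; the history at
round `t` is `(List.range t).map x`, i.e. the first `t` fixed actions. -/
theorem exp_weights_second_order_bound_fixed_history
    {V : Type*} [Fintype V] [DecidableEq V]
    (T : ℕ) (η : ℝ) (hη : 0 < η)
    (hK : 2 ≤ Fintype.card V)
    (x : ℕ → V)
    (L : ℕ → List V → V → ℝ)
    (hL : ∀ t ∈ Finset.range T, ∀ i : V, 0 ≤ L t ((List.range t).map x) i)
    (q : ℕ → V → ℝ)
    (hq : ∀ t ∈ Finset.range T, ∀ i : V,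
      q t i = Real.exp (-η * ∑ s ∈ Finset.range t, L s ((List.range s).map x) i) /
        ∑ j : V, Real.exp (-η * ∑ s ∈ Finset.range t, L s ((List.range s).map x) j))
    (S : ℕ → Finset V)
    (hS : ∀ t ∈ Finset.range T, ∀ i ∈ S t, L t ((List.range t).map x) i ≤ 1 / η)
    (istar : V) :
    ∑ t ∈ Finset.range T, ∑ i : V, q t i * L t ((List.range t).map x) i
        - ∑ t ∈ Finset.range T, L t ((List.range t).map x) istar ≤
      Real.log (Fintype.card V) / η +
        η * ∑ t ∈ Finset.range T,
          (∑ i ∈ S t, q t i * (1 - q t i) * L t ((List.range t).map x) i ^ 2 +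
            ∑ i ∈ Finset.univ \ S t, q t i * L t ((List.range t).map x) i ^ 2) := by
  have hVne : Nonempty V := Fintype.card_pos_iff.mp (by omega)
  set ℓ : ℕ → V → ℝ := fun s i => L s ((List.range s).map x) i with hℓdef
  have hrw : ∀ s i, L s ((List.range s).map x) i = ℓ s i := fun s i => rfl
  simp only [hrw] at hq hL hS ⊢
  set Z : ℕ → V → ℝ := fun t i => ∑ s ∈ Finset.range t, ℓ s i with hZ
  set W : ℕ → ℝ := fun t => ∑ j, Real.exp (-η * Z t j) with hWdef
  have hWpos : ∀ t, 0 < W t :=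
    fun t => Finset.sum_pos (fun j _ => Real.exp_pos _) Finset.univ_nonempty
  have hq' : ∀ t ∈ Finset.range T, ∀ i : V, q t i = Real.exp (-η * Z t i) / W t := by
    intro t ht i
    rw [hq t ht i]
  have hq0 : ∀ t ∈ Finset.range T, ∀ i : V, 0 ≤ q t i := by
    intro t ht i
    rw [hq' t ht i]
    exact div_nonneg (Real.exp_pos _).le (hWpos t).le
  have hq1 : ∀ t ∈ Finset.range T, ∑ i, q t i = 1 := by
    intro t ht
    have : ∑ i, q t i = ∑ i, Real.exp (-η * Z t i) / W t :=
      Finset.sum_congr rfl (fun i _ => hq' t ht i)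
    rw [this, ← Finset.sum_div]
    exact div_self (hWpos t).ne'
  -- key per-round inequality
  have key : ∀ t ∈ Finset.range T,
      Real.log (W (t + 1)) - Real.log (W t) + η * ∑ i, q t i * ℓ t i ≤
        η ^ 2 * (∑ i ∈ S t, q t i * (1 - q t i) * ℓ t i ^ 2 +
          ∑ i ∈ Finset.univ \ S t, q t i * ℓ t i ^ 2) := by
    intro t ht
    have hx0 : ∀ i, 0 ≤ η * ℓ t i := fun i => mul_nonneg hη.le (hL t ht i)
    have hx1 : ∀ i ∈ S t, η * ℓ t i ≤ 1 := by
      intro i hi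
      have := mul_le_mul_of_nonneg_left (hS t ht i hi) hη.le
      rwa [mul_one_div, div_self hη.ne'] at this
    have hround := round_bound (q t) (fun i => η * ℓ t i) (hq0 t ht) (hq1 t ht)
      hx0 (S t) hx1
    -- identify the mixture with W(t+1)/W t
    have hZsucc : ∀ i, Z (t + 1) i = Z t i + ℓ t i := fun i => Finset.sum_range_succ _ t
    have hmix : ∑ i, q t i * Real.exp (-(η * ℓ t i)) = W (t + 1) / W t := by
      have h1 : ∀ i : V, q t i * Real.exp (-(η * ℓ t i))
          = Real.exp (-η * Z (t + 1) i) / W t := by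
        intro i
        rw [hq' t ht i, div_mul_eq_mul_div, ← Real.exp_add]
        congr 2
        rw [hZsucc i]; ring
      rw [Finset.sum_congr rfl (fun i _ => h1 i), ← Finset.sum_div]
    rw [hmix] at hround
    rw [Real.log_div (hWpos (t + 1)).ne' (hWpos t).ne'] at hround
    have hs1 : ∑ i, q t i * (η * ℓ t i) = η * ∑ i, q t i * ℓ t i := by
      rw [Finset.mul_sum]
      exact Finset.sum_congr rfl (fun i _ => by ring)
    have hs2 : ∑ i ∈ S t, q t i * (1 - q t i) * (η * ℓ t i) ^ 2
        = η ^ 2 * ∑ i ∈ S t, q t i * (1 - q t i) * ℓ t i ^ 2 := by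
      rw [Finset.mul_sum]
      exact Finset.sum_congr rfl (fun i _ => by ring)
    have hs3 : ∑ i ∈ Finset.univ \ S t, q t i * (η * ℓ t i) ^ 2
        = η ^ 2 * ∑ i ∈ Finset.univ \ S t, q t i * ℓ t i ^ 2 := by
      rw [Finset.mul_sum]
      exact Finset.sum_congr rfl (fun i _ => by ring)
    rw [hs1, hs2, hs3] at hround
    linarith
  -- sum the key inequality
  have hsumkey : Real.log (W T) - Real.log (W 0)
      + η * ∑ t ∈ Finset.range T, ∑ i, q t i * ℓ t i ≤
      η ^ 2 * ∑ t ∈ Finset.range T,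
        (∑ i ∈ S t, q t i * (1 - q t i) * ℓ t i ^ 2 +
          ∑ i ∈ Finset.univ \ S t, q t i * ℓ t i ^ 2) := by
    have h1 := Finset.sum_le_sum key
    rw [Finset.sum_add_distrib] at h1
    rw [Finset.sum_range_sub (fun t => Real.log (W t)) T] at h1
    rw [← Finset.mul_sum, ← Finset.mul_sum] at h1
    linarith
  have hW0 : W 0 = (Fintype.card V : ℝ) := by
    rw [hWdef]
    simp [hZ]
  have hWT : -η * Z T istar ≤ Real.log (W T) := by
    have h1 : Real.exp (-η * Z T istar) ≤ W T :=
      Finset.single_le_sum (f := fun j => Real.exp (-η * Z T j))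
        (fun j _ => (Real.exp_pos _).le) (Finset.mem_univ istar)
    exact (Real.le_log_iff_exp_le (hWpos T)).mpr h1
  have hZT : Z T istar = ∑ t ∈ Finset.range T, ℓ t istar := rfl
  set SS : ℝ := ∑ t ∈ Finset.range T, ∑ i, q t i * ℓ t i with hSS
  set RR : ℝ := ∑ t ∈ Finset.range T,
      (∑ i ∈ S t, q t i * (1 - q t i) * ℓ t i ^ 2 +
        ∑ i ∈ Finset.univ \ S t, q t i * ℓ t i ^ 2) with hRR
  rw [← hZT]
  have hmain : η * (SS - Z T istar) ≤ Real.log (Fintype.card V) + η ^ 2 * RR := by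
    rw [hW0] at hsumkey
    nlinarith [hsumkey, hWT]
  calc SS - Z T istar = η * (SS - Z T istar) / η := by field_simp
    _ ≤ (Real.log (Fintype.card V) + η ^ 2 * RR) / η := by
        apply div_le_div_of_nonneg_right hmain hη.le
    _ = Real.log (Fintype.card V) / η + η * RR := by field_simp
end

section
/- Let G = (V, E) be a finite directed graph (possibly with self-loops) in which each node i ∈ V is assigned a positive weight w_i. Assume Σ_{i∈V} w_i ≤ 1 and min_{i∈V} w_i ≥ ε for some constant 0 < ε < 1/2. Then Σ_{i∈V} w_i / (w_i + Σ_{j∈N^in(i)} w_j) ≤ 4α ln(4|V|/(αε)), where α is the independence number of G. -/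
open Finset

section aux
variable {V : Type*} [DecidableEq V] (E : V → V → Prop) [DecidableRel E] (w : V → ℝ)

lemma sym_le_two_in (hw : ∀ i, 0 < w i) (U : Finset V) :
    ∑ v ∈ U, w v * ∑ u ∈ U.filter (fun u => E u v ∨ E v u), w u ≤
    2 * ∑ v ∈ U, w v * ∑ u ∈ U.filter (fun u => E u v), w u := by
  simp only [Finset.sum_filter, Finset.mul_sum, mul_ite, mul_zero]
  calc ∑ v ∈ U, ∑ u ∈ U, (if E u v ∨ E v u then w v * w u else 0)
      ≤ ∑ v ∈ U, ∑ u ∈ U, ((if E u v then w v * w u else 0) +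
          (if E v u then w v * w u else 0)) := by
        refine Finset.sum_le_sum fun v _ => Finset.sum_le_sum fun u _ => ?_
        have h1 := (hw v).le
        have h2 := (hw u).le
        have h3 : 0 ≤ w v * w u := mul_nonneg h1 h2
        split_ifs <;> simp_all
    _ = ∑ v ∈ U, ∑ u ∈ U, (if E u v then w v * w u else 0) +
          ∑ v ∈ U, ∑ u ∈ U, (if E v u then w v * w u else 0) := by
        rw [← Finset.sum_add_distrib]
        exact Finset.sum_congr rfl fun v _ => Finset.sum_add_distrib
    _ = 2 * ∑ v ∈ U, ∑ u ∈ U, (if E u v then w v * w u else 0) := by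
        rw [two_mul]
        congr 1
        rw [Finset.sum_comm]
        exact Finset.sum_congr rfl fun v _ => Finset.sum_congr rfl fun u _ => by
          split_ifs <;> ring
    _ = ∑ x ∈ U, ∑ x_1 ∈ U, (if E x_1 x then 2 * (w x * w x_1) else 0) := by
        simp [Finset.mul_sum, mul_ite]

end aux

section greedy
variable {V : Type*} [DecidableEq V] (E : V → V → Prop) [DecidableRel E] (w : V → ℝ)

lemma exists_light_vertex (hw : ∀ i, 0 < w i) (M : ℝ) (U : Finset V) (hne : U.Nonempty)
    (hU : ∀ v ∈ U, w v + ∑ j ∈ U.filter (fun j => E j v), w j ≤ M) :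
    ∃ v ∈ U, ∑ u ∈ U.filter (fun u => E u v ∨ E v u), w u ≤ 2 * M := by
  by_contra h
  push_neg at h
  have h1 : ∑ v ∈ U, w v * (2 * M) < ∑ v ∈ U, w v * ∑ u ∈ U.filter (fun u => E u v ∨ E v u), w u :=
    Finset.sum_lt_sum_of_nonempty hne fun v hv =>
      mul_lt_mul_of_pos_left (h v hv) (hw v)
  have h2 := sym_le_two_in E w hw U
  have h3 : ∑ v ∈ U, w v * ∑ u ∈ U.filter (fun u => E u v), w u ≤
      ∑ v ∈ U, w v * (M - w v) := by
    refine Finset.sum_le_sum fun v hv => mul_le_mul_of_nonneg_left ?_ (hw v).le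
    have := hU v hv
    linarith
  have h4 : 0 < ∑ v ∈ U, w v * w v :=
    Finset.sum_pos (fun v _ => mul_pos (hw v) (hw v)) hne
  have e1 : ∑ v ∈ U, w v * (M - w v) = ∑ v ∈ U, w v * M - ∑ v ∈ U, w v * w v := by
    rw [← Finset.sum_sub_distrib]; exact Finset.sum_congr rfl fun v _ => by ring
  have e2 : ∑ v ∈ U, w v * (2 * M) = 2 * ∑ v ∈ U, w v * M := by
    rw [Finset.mul_sum]; exact Finset.sum_congr rfl fun v _ => by ring
  nlinarith

lemma greedy (hw : ∀ i, 0 < w i) (M : ℝ) :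
    ∀ n : ℕ, ∀ U : Finset V, U.card ≤ n →
      (∀ v ∈ U, w v + ∑ j ∈ U.filter (fun j => E j v), w j ≤ M) →
      ∃ S : Finset V, S ⊆ U ∧ (∀ i ∈ S, ∀ j ∈ S, i ≠ j → ¬ E i j ∧ ¬ E j i) ∧
        ∑ i ∈ U, w i ≤ 3 * M * S.card := by
  intro n
  induction n with
  | zero =>
    intro U hcard _
    have : U = ∅ := Finset.card_eq_zero.mp (Nat.le_zero.mp hcard)
    subst this
    exact ⟨∅, by simp, by simp, by simp⟩
  | succ n ih =>
    intro U hcard hU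
    rcases U.eq_empty_or_nonempty with rfl | hne
    · exact ⟨∅, by simp, by simp, by simp⟩
    obtain ⟨v, hv, hvlight⟩ := exists_light_vertex E w hw M U hne hU
    set X : Finset V := insert v (U.filter (fun u => E u v ∨ E v u)) with hX
    set U' : Finset V := U \ X with hU'
    have hvM : w v ≤ M := by
      have := hU v hv
      have : 0 ≤ ∑ j ∈ U.filter (fun j => E j v), w j :=
        Finset.sum_nonneg fun j _ => (hw j).le
      linarith [hU v hv]
    have hcard' : U'.card ≤ n := by
      have hlt : U'.card < U.card := by
        refine Finset.card_lt_card ?_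
        constructor
        · exact Finset.sdiff_subset
        · intro hsub
          have : v ∈ U' := hsub hv
          simp [hU', hX] at this
      omega
    have hU'hyp : ∀ u ∈ U', w u + ∑ j ∈ U'.filter (fun j => E j u), w j ≤ M := by
      intro u hu
      have hsub : U'.filter (fun j => E j u) ⊆ U.filter (fun j => E j u) :=
        Finset.filter_subset_filter _ Finset.sdiff_subset
      have := Finset.sum_le_sum_of_subset_of_nonneg hsub (fun j _ _ => (hw j).le)
      have := hU u (Finset.sdiff_subset hu)
      linarith
    obtain ⟨S, hSsub, hSind, hSsum⟩ := ih U' hcard' hU'hyp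
    have hvnotU' : v ∉ U' := by simp [hU', hX]
    have hvS : v ∉ S := fun h => hvnotU' (hSsub h)
    have hnoadj : ∀ j ∈ S, ¬ E v j ∧ ¬ E j v := by
      intro j hj
      have hjU' : j ∈ U' := hSsub hj
      have hjU : j ∈ U := Finset.sdiff_subset hjU'
      have hjX : j ∉ X := (Finset.mem_sdiff.mp hjU').2
      have : ¬ (E j v ∨ E v j) := by
        intro hor
        exact hjX (Finset.mem_insert_of_mem (Finset.mem_filter.mpr ⟨hjU, hor⟩))
      tauto
    refine ⟨insert v S, ?_, ?_, ?_⟩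
    · intro x hx
      rcases Finset.mem_insert.mp hx with rfl | hx
      · exact hv
      · exact Finset.sdiff_subset (hSsub hx)
    · intro i hi j hj hij
      rcases Finset.mem_insert.mp hi with hi' | hi'
      · subst hi'
        rcases Finset.mem_insert.mp hj with hj' | hj'
        · exact absurd hj'.symm hij
        · exact hnoadj j hj'
      · rcases Finset.mem_insert.mp hj with hj' | hj'
        · subst hj'
          have := hnoadj i hi'
          tauto
        · exact hSind i hi' j hj' hij
    · have hsplit : ∑ i ∈ U ∩ X, w i + ∑ i ∈ U \ X, w i = ∑ i ∈ U, w i :=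
        Finset.sum_inter_add_sum_sdiff U X w
      have hXsum : ∑ i ∈ U ∩ X, w i ≤ 3 * M := by
        have hsub : U ∩ X ⊆ X := Finset.inter_subset_right
        have h1 : ∑ i ∈ U ∩ X, w i ≤ ∑ i ∈ X, w i :=
          Finset.sum_le_sum_of_subset_of_nonneg hsub (fun j _ _ => (hw j).le)
        have h2 : ∑ i ∈ X, w i ≤ w v + ∑ u ∈ U.filter (fun u => E u v ∨ E v u), w u := by
          by_cases hvf : v ∈ U.filter (fun u => E u v ∨ E v u)
          · rw [hX, Finset.insert_eq_self.mpr hvf]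
            linarith [(hw v).le]
          · rw [hX, Finset.sum_insert hvf]
        linarith
      have hcards : (insert v S).card = S.card + 1 := Finset.card_insert_of_notMem hvS
      have hM0 : 0 ≤ M := le_trans (hw v).le hvM
      rw [hcards]
      push_cast
      have : ∑ i ∈ U', w i ≤ 3 * M * S.card := hSsum
      have hU'eq : ∑ i ∈ U \ X, w i = ∑ i ∈ U', w i := by rw [hU']
      nlinarith

end greedy

section main
variable {V : Type*} [Fintype V] [DecidableEq V] (E : V → V → Prop) [DecidableRel E] (w : V → ℝ)

lemma main_ind (hw : ∀ i, 0 < w i) (ε : ℝ) (hε0 : 0 < ε) (hwε : ∀ i, ε ≤ w i)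
    (α : ℕ) (hα : 1 ≤ α)
    (hα2 : ∀ S : Finset V, (∀ i ∈ S, ∀ j ∈ S, i ≠ j → ¬ E i j ∧ ¬ E j i) → S.card ≤ α) :
    ∀ n : ℕ, ∀ T : Finset V, T.card ≤ n → T.Nonempty →
      ∑ i ∈ T, w i / (w i + ∑ j ∈ Finset.univ.filter (fun j => E j i), w j) ≤
        3 * α * (1 + Real.log ((∑ i ∈ T, w i) / ε)) := by
  intro n
  induction n with
  | zero =>
    intro T hcard hne
    have := Finset.card_pos.mpr hne
    omega
  | succ n ih =>
    intro T hcard hne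
    obtain ⟨v, hv, hmax⟩ := Finset.exists_max_image T
      (fun i => w i + ∑ j ∈ T.filter (fun j => E j i), w j) hne
    set M : ℝ := w v + ∑ j ∈ T.filter (fun j => E j v), w j with hM
    have hM0 : 0 < M := by
      have : 0 ≤ ∑ j ∈ T.filter (fun j => E j v), w j :=
        Finset.sum_nonneg fun j _ => (hw j).le
      have := hw v
      rw [hM]; linarith
    set W : ℝ := ∑ i ∈ T, w i with hW
    have hW0 : 0 < W := Finset.sum_pos (fun i _ => hw i) hne
    -- W ≤ 3 M α
    obtain ⟨S, _, hSind, hSsum⟩ := greedy E w hw M T.card T le_rfl hmax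
    have hScard : (S.card : ℝ) ≤ (α : ℝ) := by exact_mod_cast hα2 S hSind
    have hWM : W ≤ 3 * M * α := by
      calc W ≤ 3 * M * S.card := hSsum
        _ ≤ 3 * M * α := by
          have := hM0.le
          nlinarith
    have hα0 : (0:ℝ) < (α : ℝ) := by exact_mod_cast hα
    have hMlb : W / (3 * α) ≤ M := by
      rw [div_le_iff₀ (by positivity)]
      nlinarith
    -- global s_v at least M
    set s : V → ℝ := fun i => w i + ∑ j ∈ Finset.univ.filter (fun j => E j i), w j with hs
    have hsv : M ≤ s v := by
      have hsub : T.filter (fun j => E j v) ⊆ Finset.univ.filter (fun j => E j v) :=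
        Finset.filter_subset_filter _ (Finset.subset_univ T)
      have := Finset.sum_le_sum_of_subset_of_nonneg hsub (fun j _ _ => (hw j).le)
      rw [hs, hM]
      simp only []
      linarith
    have hsv0 : 0 < s v := lt_of_lt_of_le hM0 hsv
    have hterm : w v / s v ≤ 3 * α * (w v / W) := by
      have h1 : w v / s v ≤ w v / (W / (3 * α)) := by
        apply div_le_div_of_nonneg_left (hw v).le (by positivity)
        exact le_trans hMlb hsv
      calc w v / s v ≤ w v / (W / (3 * α)) := h1
        _ = 3 * α * (w v / W) := by field_simp
    rcases (T.erase v).eq_empty_or_nonempty with herase | herase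
    · -- T = {v}
      have hTv : T = {v} := by
        have := (Finset.erase_eq_empty_iff T v).mp herase
        rcases this with h | h
        · exact absurd h (Finset.nonempty_iff_ne_empty.mp hne)
        · exact h
      subst hTv
      rw [Finset.sum_singleton]
      have h1 : w v / s v ≤ 1 := by
        rw [div_le_one hsv0]
        have : 0 ≤ ∑ j ∈ Finset.univ.filter (fun j => E j v), w j :=
          Finset.sum_nonneg fun j _ => (hw j).le
        rw [hs]; simp only []; linarith
      have hlog : 0 ≤ Real.log (W / ε) := by
        apply Real.log_nonneg
        rw [le_div_iff₀ hε0]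
        have : W = w v := by rw [hW, Finset.sum_singleton]
        rw [this, one_mul]
        exact hwε v
      calc w v / s v ≤ 1 := h1
        _ ≤ 3 * α * (1 + Real.log (W / ε)) := by
            have hα1 : (1:ℝ) ≤ (α:ℝ) := by exact_mod_cast hα
            nlinarith
    · -- inductive step
      have hcard' : (T.erase v).card ≤ n := by
        have := Finset.card_erase_of_mem hv
        omega
      have hIH := ih (T.erase v) hcard' herase
      set W' : ℝ := ∑ i ∈ T.erase v, w i with hW'
      have hW'0 : 0 < W' := Finset.sum_pos (fun i _ => hw i) herase
      have hWsplit : W' + w v = W := by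
        rw [hW', hW]
        exact Finset.sum_erase_add T w hv
      have hsplit : ∑ i ∈ T, w i / s i = w v / s v + ∑ i ∈ T.erase v, w i / s i := by
        rw [add_comm]
        exact (Finset.sum_erase_add T _ hv).symm
      -- log inequality : w v / W ≤ log W - log W'
      have hloggap : w v / W ≤ Real.log W - Real.log W' := by
        have h1 : Real.log (W' / W) ≤ W' / W - 1 := Real.log_le_sub_one_of_pos (by positivity)
        rw [Real.log_div (ne_of_gt hW'0) (ne_of_gt hW0)] at h1
        have h2 : W' / W - 1 = - (w v / W) := by
          field_simp
          linarith
        rw [h2] at h1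
        linarith
      have hlogW : Real.log (W / ε) = Real.log W - Real.log ε :=
        Real.log_div (ne_of_gt hW0) (ne_of_gt hε0)
      have hlogW' : Real.log (W' / ε) = Real.log W' - Real.log ε :=
        Real.log_div (ne_of_gt hW'0) (ne_of_gt hε0)
      rw [hsplit]
      calc w v / s v + ∑ i ∈ T.erase v, w i / s i
          ≤ 3 * α * (w v / W) + 3 * α * (1 + Real.log (W' / ε)) :=
            add_le_add hterm hIH
        _ = 3 * α * (w v / W + 1 + Real.log (W' / ε)) := by ring
        _ ≤ 3 * α * (1 + Real.log (W / ε)) := by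
            apply mul_le_mul_of_nonneg_left _ (by positivity)
            rw [hlogW, hlogW']
            linarith

end main

/-- Graph-theoretic lemma of Alon et al. (Lemma 6 of the paper): for a directed
graph with positive node weights summing to at most 1, each at least ε, the sum
of `w i / (w i + Σ_{j ∈ N^in(i)} w j)` is at most `4 α ln (4|V|/(α ε))`, where
`α` is the independence number of the graph (the size of the largest set of
vertices no two distinct elements of which are joined by an edge in either
direction). -/
theorem graph_weight_ratio_bound
    {V : Type*} [Fintype V] (E : V → V → Prop) [DecidableRel E]
    (w : V → ℝ) (hw : ∀ i : V, 0 < w i)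
    (hsum : ∑ i : V, w i ≤ 1)
    (ε : ℝ) (hε0 : 0 < ε) (hε : ε < 1 / 2)
    (hwε : ∀ i : V, ε ≤ w i)
    (α : ℕ)
    (hα1 : ∃ S : Finset V,
      (∀ i ∈ S, ∀ j ∈ S, i ≠ j → ¬ E i j ∧ ¬ E j i) ∧ S.card = α)
    (hα2 : ∀ S : Finset V,
      (∀ i ∈ S, ∀ j ∈ S, i ≠ j → ¬ E i j ∧ ¬ E j i) → S.card ≤ α) :
    ∑ i : V, w i / (w i + ∑ j ∈ Finset.univ.filter (fun j => E j i), w j) ≤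
      4 * α * Real.log (4 * Fintype.card V / (α * ε)) := by
  classical
  rcases isEmpty_or_nonempty V with hV | hV
  · obtain ⟨S, _, hScard⟩ := hα1
    have hS : S = ∅ := Subsingleton.elim _ _
    have hα0 : α = 0 := by rw [← hScard, hS]; simp
    subst hα0
    simp
  · -- α ≥ 1
    have hα : 1 ≤ α := by
      have := hα2 {Classical.arbitrary V} (by
        intro i hi j hj hij
        simp only [Finset.mem_singleton] at hi hj
        subst hi; subst hj; exact absurd rfl hij)
      simpa using this
    have key := main_ind E w hw ε hε0 hwε α hα hα2 Finset.univ.card Finset.univ le_rfl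
      Finset.univ_nonempty
    set W : ℝ := ∑ i ∈ Finset.univ, w i with hWdef
    have hW0 : 0 < W := Finset.sum_pos (fun i _ => hw i) Finset.univ_nonempty
    have hαn : α ≤ Fintype.card V := by
      obtain ⟨S, _, hScard⟩ := hα1
      rw [← hScard]
      exact Finset.card_le_univ S
    have hα0R : (0:ℝ) < (α:ℝ) := by exact_mod_cast hα
    have hn0R : (0:ℝ) < (Fintype.card V : ℝ) := lt_of_lt_of_le hα0R (by exact_mod_cast hαn)
    have hlogε : Real.log ε < 0 := Real.log_neg hε0 (by linarith)
    have hlog2 : (0.6931471803:ℝ) < Real.log 2 := Real.log_two_gt_d9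
    have hlog4 : Real.log 4 = 2 * Real.log 2 := by
      rw [show (4:ℝ) = 2^2 by norm_num, Real.log_pow]
      push_cast; ring
    -- step A : log (W/ε) ≤ - log ε
    have hA : Real.log (W / ε) ≤ - Real.log ε := by
      have h1 : W / ε ≤ 1 / ε := by gcongr
      have h2 := Real.log_le_log (by positivity) h1
      rwa [Real.log_div one_ne_zero (ne_of_gt hε0), Real.log_one, zero_sub] at h2
    -- step B : log 4 - log ε ≤ log (4 n / (α ε))
    have hB : Real.log 4 - Real.log ε ≤
        Real.log (4 * Fintype.card V / (α * ε)) := by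
      have h1 : (4:ℝ) / ε ≤ 4 * Fintype.card V / (α * ε) := by
        rw [div_le_div_iff₀ hε0 (by positivity)]
        have : (α:ℝ) ≤ (Fintype.card V : ℝ) := by exact_mod_cast hαn
        nlinarith
      have h2 := Real.log_le_log (by positivity) h1
      rwa [Real.log_div (by norm_num) (ne_of_gt hε0)] at h2
    have hfinal : 3 * (α:ℝ) * (1 + Real.log (W / ε)) ≤
        4 * α * Real.log (4 * Fintype.card V / (α * ε)) := by
      have hc : 3 * (1 - Real.log ε) ≤ 4 * (Real.log 4 - Real.log ε) := by nlinarith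
      calc 3 * (α:ℝ) * (1 + Real.log (W / ε)) ≤ 3 * α * (1 - Real.log ε) := by nlinarith
        _ ≤ 4 * α * (Real.log 4 - Real.log ε) := by nlinarith
        _ ≤ 4 * α * Real.log (4 * Fintype.card V / (α * ε)) := by nlinarith
    exact le_trans key hfinal
end

section
/- Let T ≥ 1 be an integer. For integers t ≥ 1 define δ(t) = max{i ≥ 0 : 2^i divides t} and the parent function ρ(t) = t − 2^{δ(t)}. For t ∈ {1, …, T} define cut(t) = {s ∈ {1, …, T} : ρ(s) < t ≤ s}. Then the width w(ρ) = max_{1 ≤ t ≤ T} |cut(t)| satisfies w(ρ) ≤ ⌊log₂ T⌋ + 1. -/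
/-- The multi-scale random walk parent function `ρ(t) = t - 2^{δ(t)}`, where
`δ(t) = max {i : 2^i ∣ t}` is the 2-adic valuation of `t`. -/
def mrwRho (t : ℕ) : ℕ := t - 2 ^ padicValNat 2 t

/-- Width bound for the multi-scale random walk parent function: with
`cut(t) = {s ∈ {1,…,T} : ρ(s) < t ≤ s}`, the width
`w(ρ) = max_{1 ≤ t ≤ T} |cut(t)|` is at most `⌊log₂ T⌋ + 1`. -/
theorem mrw_width_le (T : ℕ) (hT : 1 ≤ T) :
    ∀ t ∈ Finset.Icc 1 T,
      ((Finset.Icc 1 T).filter (fun s => mrwRho s < t ∧ t ≤ s)).card ≤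
        Nat.log 2 T + 1 := by
  intro t ht
  have := Finset.card_le_card_of_injOn (f := fun s => padicValNat 2 s)
    (s := (Finset.Icc 1 T).filter (fun s => mrwRho s < t ∧ t ≤ s))
    (t := Finset.range (Nat.log 2 T + 1))
    (by
      intro s hs
      simp only [Finset.coe_filter, Set.mem_setOf_eq, Finset.mem_coe, Finset.mem_filter, Finset.mem_Icc] at hs
      obtain ⟨⟨hs1, hsT⟩, _, _⟩ := hs
      have hdvd : 2 ^ padicValNat 2 s ∣ s := pow_padicValNat_dvd
      have hle : 2 ^ padicValNat 2 s ≤ T :=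
        le_trans (Nat.le_of_dvd (by omega) hdvd) hsT
      have : padicValNat 2 s ≤ Nat.log 2 T :=
        (Nat.le_log_iff_pow_le one_lt_two (by omega)).mpr hle
      simpa [Finset.mem_range, Nat.lt_succ_iff] using this)
    (by
      intro s₁ h₁ s₂ h₂ hv
      simp only [Finset.coe_filter, Set.mem_setOf_eq, Finset.mem_coe, Finset.mem_filter, Finset.mem_Icc] at h₁ h₂ hv
      simp only [mrwRho] at h₁ h₂
      obtain ⟨⟨hs11, hs1T⟩, hρ1, ht1⟩ := h₁
      obtain ⟨⟨hs21, hs2T⟩, hρ2, ht2⟩ := h₂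
      set v := padicValNat 2 s₁ with hv1
      have hd1 : 2 ^ v ∣ s₁ := pow_padicValNat_dvd
      have hd2 : 2 ^ v ∣ s₂ := hv ▸ pow_padicValNat_dvd
      have hρ2' : s₂ - 2 ^ v < t := by rwa [← hv] at hρ2
      rcases lt_trichotomy s₁ s₂ with h | h | h
      · exfalso
        have : 2 ^ v ∣ s₂ - s₁ := Nat.dvd_sub hd2 hd1
        have h2 : 2 ^ v ≤ s₂ - s₁ := Nat.le_of_dvd (by omega) this
        omega
      · exact h
      · exfalso
        have : 2 ^ v ∣ s₁ - s₂ := Nat.dvd_sub hd1 hd2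
        have h2 : 2 ^ v ≤ s₁ - s₂ := Nat.le_of_dvd (by omega) this
        omega)
  simpa using this
end

section
/- Let T ≥ 1 be an integer, let δ(t) = max{i ≥ 0 : 2^i divides t}, ρ(t) = t − 2^{δ(t)}, cut(t) = {s ∈ {1, …, T} : ρ(s) < t ≤ s}, and w = max_{1 ≤ t ≤ T} |cut(t)|. Let X_0, X_1, …, X_T be any sequence of elements of a set 𝒳, and let M = |{s ∈ {1, …, T} : X_s ≠ X_{s−1}}| be the number of switches. Then |{t ∈ {1, …, T} : X_t ≠ X_{ρ(t)}}| ≤ w · M. -/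
lemma mrwRho_lt {t : ℕ} (ht : 1 ≤ t) : mrwRho t < t := by
  have h1 : 2 ^ padicValNat 2 t ∣ t := pow_padicValNat_dvd
  have h2 : 2 ^ padicValNat 2 t ≤ t := Nat.le_of_dvd ht h1
  have h3 : 0 < 2 ^ padicValNat 2 t := Nat.pow_pos (by norm_num)
  unfold mrwRho
  omega

lemma no_switch_const {𝒳 : Type*} (X : ℕ → 𝒳) (a : ℕ) :
    ∀ t, a ≤ t → (∀ s, a < s → s ≤ t → X s = X (s - 1)) → X t = X a := by
  intro t
  induction t with
  | zero =>
    intro h _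
    have : a = 0 := by omega
    rw [this]
  | succ n ih =>
    intro h hs
    rcases Nat.eq_or_lt_of_le h with h' | h'
    · rw [h']
    · have : X (n+1) = X n := by
        have := hs (n+1) (by omega) le_rfl
        simpa using this
      rw [this]
      exact ih (by omega) (fun s hs1 hs2 => hs s hs1 (by omega))

/-- For any sequence of actions `X_0, X_1, …, X_T`, the number of rounds
`t ∈ {1,…,T}` at which `X_t ≠ X_{ρ(t)}` is at most the width
`w = max_{1 ≤ t ≤ T} |cut(t)|` of the parent function times the number of
switches `M = |{s ∈ {1,…,T} : X_s ≠ X_{s-1}}|`. -/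
theorem mrw_disagreement_le_width_mul_switches
    {𝒳 : Type*} [DecidableEq 𝒳] (T : ℕ) (hT : 1 ≤ T) (X : ℕ → 𝒳) :
    ((Finset.Icc 1 T).filter (fun t => X t ≠ X (mrwRho t))).card ≤
      ((Finset.Icc 1 T).sup fun t =>
          ((Finset.Icc 1 T).filter (fun s => mrwRho s < t ∧ t ≤ s)).card) *
        ((Finset.Icc 1 T).filter (fun s => X s ≠ X (s - 1))).card := by
  classical
  set D := (Finset.Icc 1 T).filter (fun t => X t ≠ X (mrwRho t)) with hD
  set w := (Finset.Icc 1 T).sup fun t =>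
      ((Finset.Icc 1 T).filter (fun s => mrwRho s < t ∧ t ≤ s)).card with hw
  set S := (Finset.Icc 1 T).filter (fun s => X s ≠ X (s - 1)) with hS
  -- each t ∈ D has a switch s with ρ(t) < s ≤ t
  have hex : ∀ t ∈ D, ∃ s, mrwRho t < s ∧ s ≤ t ∧ X s ≠ X (s - 1) := by
    intro t ht
    simp only [hD, Finset.mem_filter, Finset.mem_Icc] at ht
    by_contra hcon
    push_neg at hcon
    exact ht.2 (no_switch_const X (mrwRho t) t (le_of_lt (mrwRho_lt ht.1.1))
      (fun s h1 h2 => hcon s h1 h2))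
  choose f hf1 hf2 hf3 using hex
  -- attach-based function
  let g : ℕ → ℕ := fun t => if h : t ∈ D then f t h else 0
  have hg1 : ∀ t ∈ D, mrwRho t < g t := fun t ht => by simp [g, ht, hf1]
  have hg2 : ∀ t ∈ D, g t ≤ t := fun t ht => by simp [g, ht, hf2]
  have hg3 : ∀ t ∈ D, X (g t) ≠ X (g t - 1) := fun t ht => by simp [g, ht]; exact hf3 t ht
  have himg : D.image g ⊆ S := by
    intro a ha
    rcases Finset.mem_image.mp ha with ⟨t, htD, rfl⟩
    have htT : t ∈ Finset.Icc 1 T := (Finset.mem_filter.mp htD).1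
    rw [Finset.mem_Icc] at htT
    simp only [hS, Finset.mem_filter, Finset.mem_Icc]
    refine ⟨⟨?_, ?_⟩, hg3 t htD⟩
    · have := hg1 t htD; omega
    · have := hg2 t htD; omega
  have key : D.card ≤ w * (D.image g).card := by
    apply Finset.card_le_mul_card_image
    intro a ha
    rcases Finset.mem_image.mp ha with ⟨t0, ht0, rfl⟩
    have haT : g t0 ∈ Finset.Icc 1 T := himg (Finset.mem_image_of_mem g ht0) |>
      (fun h => (Finset.mem_filter.mp h).1)
    have hsub : (D.filter fun x => g x = g t0) ⊆
        (Finset.Icc 1 T).filter (fun s => mrwRho s < g t0 ∧ g t0 ≤ s) := by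
      intro x hx
      rw [Finset.mem_filter] at hx ⊢
      refine ⟨(Finset.mem_filter.mp hx.1).1, ?_, ?_⟩
      · rw [← hx.2]; exact hg1 x hx.1
      · rw [← hx.2]; exact hg2 x hx.1
    calc (D.filter fun x => g x = g t0).card
        ≤ ((Finset.Icc 1 T).filter (fun s => mrwRho s < g t0 ∧ g t0 ≤ s)).card :=
          Finset.card_le_card hsub
      _ ≤ w := hw ▸ Finset.le_sup
          (f := fun t => ((Finset.Icc 1 T).filter (fun s => mrwRho s < t ∧ t ≤ s)).card) haT
  calc D.card ≤ w * (D.image g).card := key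
    _ ≤ w * S.card := Nat.mul_le_mul_left w (Finset.card_le_card himg)
end
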